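/- Let k be a field of characteristic 0, S = k[x_0,...,x_n], and let μ ≤ d be positive integers. Let J ⊆ S be a Borel-fixed monomial ideal (i.e., if x_i·m ∈ J for a monomial m, then x_j·m ∈ J for all j > i) such that dim_k(S_d/J_d) = μ. Then J_d + x_0·S_{d−1} = S_d; equivalently, there exists a family B of μ monomials of degree d−1 such that x_0·B is a k-basis of S_d/J_d. -/

import Mathlib

open MvPolynomial

noncomputable section

/-- `S_d`: the `k`-vector space of homogeneous polynomials of degree `d` in
`S = k[x_0, …, x_n]`. -/
def homogComp (n : ℕ) (k : Type*) [CommRing k] (d : ℕ) :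
    Submodule k (MvPolynomial (Fin (n + 1)) k) :=
  homogeneousSubmodule (Fin (n + 1)) k d

/-- The quotient `S_d / J_d` where `J_d = J ∩ S_d`. -/
def quotComp {n : ℕ} {k : Type*} [CommRing k]
    (N : Submodule k (MvPolynomial (Fin (n + 1)) k)) (d : ℕ) :=
  homogComp n k d ⧸ N.comap (homogComp n k d).subtype

instance {n : ℕ} {k : Type*} [CommRing k]
    (N : Submodule k (MvPolynomial (Fin (n + 1)) k)) (d : ℕ) :
    AddCommGroup (quotComp N d) := by unfold quotComp; infer_instance

instance {n : ℕ} {k : Type*} [CommRing k]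
    (N : Submodule k (MvPolynomial (Fin (n + 1)) k)) (d : ℕ) :
    Module k (quotComp N d) := by unfold quotComp; infer_instance

/-- A monomial ideal: an ideal containing, with each element, every monomial occurring
in its support. -/
def IsMonomialIdeal {n : ℕ} {k : Type*} [CommRing k]
    (J : Ideal (MvPolynomial (Fin (n + 1)) k)) : Prop :=
  ∀ f ∈ J, ∀ α ∈ f.support, (monomial α (1 : k)) ∈ J

/-- A monomial ideal `J` is Borel-fixed if whenever `x_i · m ∈ J` for a monomial `m`,
then `x_j · m ∈ J` for every `j > i`. -/
def IsBorelFixed {n : ℕ} {k : Type*} [CommRing k]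
    (J : Ideal (MvPolynomial (Fin (n + 1)) k)) : Prop :=
  ∀ (α : Fin (n + 1) →₀ ℕ) (i j : Fin (n + 1)), i < j →
    X i * monomial α (1 : k) ∈ J → X j * monomial α (1 : k) ∈ J


/-! If `J_d` missed a monomial `x^α` with `α_0 = 0`, the Borel moves `x_i ↦ x_0` applied one
at a time would produce monomials of degree `d` outside `J` with every `x_0`-exponent
`0, 1, …, d`. Their classes are independent in `S_d / J_d` since `J` is monomial, so
`d + 1 ≤ μ`, contradicting `μ ≤ d`. Hence `J_d` contains every degree-`d` monomial not divisible
by `x_0`, and all others lie in `x_0 · S_{d-1}`. -/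

theorem MvPolynomial.homogeneousSubmodule_eq_span_monomial {σ R : Type*} [CommSemiring R]
    (d : ℕ) :
    homogeneousSubmodule σ R d =
      Submodule.span R ((fun α => monomial α (1 : R)) '' {α : σ →₀ ℕ | α.degree = d}) := by
  rw [homogeneousSubmodule_eq_finsupp_supported, AddMonoidAlgebra.supported_eq_span_single]
  rfl

theorem Finsupp.degree_sub_single_one_add {σ : Type*} {α : σ →₀ ℕ} {i : σ} (h : α i ≠ 0) :
    (α - Finsupp.single i 1).degree + 1 = α.degree := by
  conv_rhs => rw [← Finsupp.sub_add_single_one_cancel h]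
  rw [map_add, Finsupp.degree_single]

theorem Finsupp.exists_succ_ne_zero_of_apply_zero_lt_degree {n : ℕ} {β : Fin (n + 1) →₀ ℕ}
    (h : β 0 < β.degree) : ∃ i : Fin n, β i.succ ≠ 0 := by
  rw [Finsupp.degree_eq_sum, Fin.sum_univ_succ] at h
  by_contra! hz
  simp [hz] at h

theorem MvPolynomial.X_mul_monomial_sub_single_one {σ R : Type*} [CommSemiring R]
    {α : σ →₀ ℕ} {i : σ} (h : α i ≠ 0) (r : R) :
    X i * monomial (α - Finsupp.single i 1) r = monomial α r := by
  rw [← pow_one (X i), ← monomial_single_add, add_comm, Finsupp.sub_add_single_one_cancel h]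

namespace IsBorelFixed

variable {k : Type*} [CommRing k] {n : ℕ} {J : Ideal (MvPolynomial (Fin (n + 1)) k)}

theorem monomial_sub_single_add_single_notMem (hJ : IsBorelFixed J)
    {β : Fin (n + 1) →₀ ℕ} {i j : Fin (n + 1)} (hij : i < j) (hβ : β j ≠ 0)
    (h : monomial β (1 : k) ∉ J) :
    monomial (β - Finsupp.single j 1 + Finsupp.single i 1) (1 : k) ∉ J := by
  rw [monomial_add_single, pow_one, mul_comm]
  intro hi
  exact h (X_mul_monomial_sub_single_one hβ (1 : k) ▸ hJ _ i j hij hi)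

theorem exists_monomial_notMem_apply_zero_succ (hJ : IsBorelFixed J)
    {β : Fin (n + 1) →₀ ℕ} (hβ : β 0 < β.degree) (h : monomial β (1 : k) ∉ J) :
    ∃ γ : Fin (n + 1) →₀ ℕ, γ.degree = β.degree ∧ γ 0 = β 0 + 1 ∧ monomial γ (1 : k) ∉ J := by
  obtain ⟨i, hi⟩ := Finsupp.exists_succ_ne_zero_of_apply_zero_lt_degree hβ
  refine ⟨_, ?_, ?_, hJ.monomial_sub_single_add_single_notMem i.succ_pos hi h⟩
  · rw [map_add, Finsupp.degree_single, Finsupp.degree_sub_single_one_add hi]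
  · simp [(Fin.succ_ne_zero i).symm]

theorem exists_monomial_notMem_apply_zero_eq (hJ : IsBorelFixed J)
    {α : Fin (n + 1) →₀ ℕ} (h : monomial α (1 : k) ∉ J) {j : ℕ} (hαj : α 0 ≤ j)
    (hj : j ≤ α.degree) :
    ∃ β : Fin (n + 1) →₀ ℕ, β.degree = α.degree ∧ β 0 = j ∧ monomial β (1 : k) ∉ J := by
  induction j, hαj using Nat.le_induction with
  | base => exact ⟨α, rfl, rfl, h⟩
  | succ j _ ih =>
    obtain ⟨β, hβd, rfl, hβ⟩ := ih (by omega)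
    obtain ⟨γ, hγd, hγ0, hγ⟩ := hJ.exists_monomial_notMem_apply_zero_succ (by omega) hβ
    exact ⟨γ, hγd.trans hβd, hγ0, hγ⟩

end IsBorelFixed

theorem IsMonomialIdeal.linearIndependent_mk_monomial {k : Type*} [CommRing k] {n d : ℕ}
    {J : Ideal (MvPolynomial (Fin (n + 1)) k)} (hJ : IsMonomialIdeal J) {ι : Type*}
    {β : ι → Fin (n + 1) →₀ ℕ} (hinj : Function.Injective β) (hd : ∀ i, (β i).degree = d)
    (hβ : ∀ i, monomial (β i) (1 : k) ∉ J) :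
    LinearIndependent (M := quotComp (J.restrictScalars k) d) k fun i =>
      Submodule.Quotient.mk
        (⟨monomial (β i) (1 : k), isHomogeneous_monomial _ (hd i)⟩ : homogComp n k d) := by
  refine linearIndependent_iff'.2 fun s g hg i hi => ?_
  by_contra hgi
  set F : ι → homogComp n k d := fun j => ⟨monomial (β j) 1, isHomogeneous_monomial _ (hd j)⟩
  have hsum :
      (Submodule.Quotient.mk (∑ j ∈ s, g j • F j) : quotComp (J.restrictScalars k) d) = 0 := by
    rw [← Submodule.mkQ_apply, map_sum]
    simp only [map_smul, Submodule.mkQ_apply]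
    exact hg
  have hmem : ∑ j ∈ s, monomial (β j) (g j) ∈ J := by
    rw [Submodule.Quotient.mk_eq_zero, Submodule.mem_comap, Submodule.restrictScalars_mem] at hsum
    simpa [F, smul_monomial] using hsum
  have hcoeff : coeff (β i) (∑ j ∈ s, monomial (β j) (g j)) = g i := by
    rw [coeff_sum, Finset.sum_eq_single i]
    · simp
    · intro j _ hji
      rw [coeff_monomial, if_neg (hinj.ne hji)]
    · exact absurd hi
  exact hβ i (hJ _ hmem _ (by rwa [mem_support_iff, hcoeff]))

theorem IsBorelFixed.card_Icc_le_finrank_quotComp {k : Type*} [Field k] {n d : ℕ}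
    {J : Ideal (MvPolynomial (Fin (n + 1)) k)} (hborel : IsBorelFixed J)
    (hmono : IsMonomialIdeal J) [Module.Finite k (quotComp (J.restrictScalars k) d)]
    {α : Fin (n + 1) →₀ ℕ} (hα : α.degree = d) (h : monomial α (1 : k) ∉ J) :
    (Finset.Icc (α 0) d).card ≤ Module.finrank k (quotComp (J.restrictScalars k) d) := by
  choose β hβd hβ0 hβ using fun j : Finset.Icc (α 0) d =>
    hborel.exists_monomial_notMem_apply_zero_eq h (Finset.mem_Icc.1 j.2).1
      (hα ▸ (Finset.mem_Icc.1 j.2).2)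
  have hinj : Function.Injective β := fun i j hij => Subtype.ext (by rw [← hβ0 i, ← hβ0 j, hij])
  simpa using (hmono.linearIndependent_mk_monomial hinj (fun j => (hβd j).trans hα)
    hβ).fintype_card_le_finrank

theorem homogComp_succ_eq_sup {k : Type*} [CommRing k] {n m : ℕ}
    {N : Submodule k (MvPolynomial (Fin (n + 1)) k)}
    (hN : ∀ α : Fin (n + 1) →₀ ℕ, α.degree = m + 1 → α 0 = 0 → monomial α (1 : k) ∈ N) :
    (N ⊓ homogComp n k (m + 1)) ⊔ (homogComp n k m).map
        (LinearMap.mulLeft k (X (0 : Fin (n + 1)) : MvPolynomial (Fin (n + 1)) k)) =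
      homogComp n k (m + 1) := by
  refine le_antisymm (sup_le inf_le_right ?_) ?_
  · rintro _ ⟨q, hq, rfl⟩
    have hXq := (isHomogeneous_X k (0 : Fin (n + 1))).mul hq
    rwa [Nat.add_comm 1 m] at hXq
  · refine le_of_eq_of_le (homogeneousSubmodule_eq_span_monomial _) (Submodule.span_le.2 ?_)
    rintro _ ⟨α, hα : α.degree = m + 1, rfl⟩
    by_cases h0 : α 0 = 0
    · exact Submodule.mem_sup_left ⟨hN α hα h0, isHomogeneous_monomial _ hα⟩
    · refine Submodule.mem_sup_right ⟨monomial (α - Finsupp.single 0 1) 1,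
        isHomogeneous_monomial _ ?_, X_mul_monomial_sub_single_one h0 _⟩
      have := Finsupp.degree_sub_single_one_add h0
      omega

theorem borel_fixed_complement_general {k : Type*} [Field k]
    {n μ d : ℕ} (hμ : 0 < μ) (hμd : μ ≤ d)
    (J : Ideal (MvPolynomial (Fin (n + 1)) k))
    (hmono : IsMonomialIdeal J) (hborel : IsBorelFixed J)
    (hdim : Module.finrank k (quotComp (J.restrictScalars k) d) = μ) :
    (J.restrictScalars k ⊓ homogComp n k d) ⊔
        (homogComp n k (d - 1)).map
          (LinearMap.mulLeft k (X (0 : Fin (n + 1)) : MvPolynomial (Fin (n + 1)) k)) =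
      homogComp n k d := by
  have : Module.Finite k (quotComp (J.restrictScalars k) d) :=
    Module.finite_of_finrank_pos (hdim ▸ hμ)
  obtain ⟨m, rfl⟩ : ∃ m, d = m + 1 := ⟨d - 1, by omega⟩
  rw [Nat.add_sub_cancel]
  refine homogComp_succ_eq_sup fun α hα h0 => ?_
  by_contra h
  have := hborel.card_Icc_le_finrank_quotComp hmono hα h
  rw [Nat.card_Icc] at this
  omega

/-- key step in the proof of Theorem `equi`.
Let `k` be a field of characteristic 0, `S = k[x_0, …, x_n]`, `μ ≤ d` positive integers,
and `J ⊆ S` a Borel-fixed monomial ideal with `dim_k (S_d / J_d) = μ`.  Then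
`J_d + x_0 · S_{d−1} = S_d`. -/
theorem borel_fixed_complement {k : Type*} [Field k] [CharZero k]
    {n μ d : ℕ} (hμ : 0 < μ) (hμd : μ ≤ d)
    (J : Ideal (MvPolynomial (Fin (n + 1)) k))
    (hmono : IsMonomialIdeal J) (hborel : IsBorelFixed J)
    (hdim : Module.finrank k (quotComp (J.restrictScalars k) d) = μ) :
    (J.restrictScalars k ⊓ homogComp n k d) ⊔
        (homogComp n k (d - 1)).map
          (LinearMap.mulLeft k (X (0 : Fin (n + 1)) : MvPolynomial (Fin (n + 1)) k)) =
      homogComp n k d :=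
  borel_fixed_complement_general hμ hμd J hmono hborel hdim

end
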